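/- (Smoothness framework) Suppose f is twice continuously differentiable on (0,∞). For any θ, v ∈ ℝ^{S×A} and any state s ∈ S, the second derivative at l = 0 of the map l ↦ V_f^{π_{θ+lv}}(s) satisfies | d²/dl² V_f^{π_{θ+lv}}(s) |_{l=0} | ≤ (4γ‖v‖₂/(1−γ)²) · ‖D D_f(θ)[v]‖_∞ + (8γ‖v‖₂²/(1−γ)³) · ‖D_f(θ)‖_∞ + (1/(1−γ)) · ‖D² D_f(θ)[v,v]‖_∞. -/

import Mathlib

/-! Along the line `l ↦ θ + l • v` let `π_l` be the softmax policy, `T_l` its state-transition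
operator `(T_l x)(s) = ∑_a π_l(a|s) ∑_{s'} P(s'|s,a) x(s')` on `S → ℝ` with the sup norm, and `D_l`
the vector of divergences. The Bellman equation reads `V_l = D_l + γ T_l V_l`; since `‖T_l‖ ≤ 1`,
`V_l = (1 - γ T_l)⁻¹ D_l` is `C²`. Differentiating the equation shows that `V'` and `V''` solve
the same fixed-point equation, with sources `D' + γ T' V` and `D'' + γ (T'' V + 2 T' V')`, and
every such fixed point has norm at most `‖source‖ / (1 - γ)`. For softmax, `‖T'‖ ≤ 2 ‖v‖_∞` and
`‖T''‖ ≤ 6 ‖v‖_∞² ≤ 8 ‖v‖_∞²`, and `‖v‖_∞ ≤ ‖v‖₂`; chaining the three fixed-point bounds gives the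
claim. -/

open Finset

/-- The softmax policy `π_θ(a|s) = exp(θ_{sa})/∑_{a'} exp(θ_{sa'})`. -/
noncomputable def softmaxPolicy {S A : Type*} [Fintype A]
    (θ : S × A → ℝ) (s : S) (a : A) : ℝ :=
  Real.exp (θ (s, a)) / ∑ a' : A, Real.exp (θ (s, a'))

/-- The `f`-divergence `D_f(p,q) := ∑_a q(a) f(p(a)/q(a))` of two probability vectors. -/
noncomputable def fDiv {A : Type*} [Fintype A] (f : ℝ → ℝ) (p q : A → ℝ) : ℝ :=
  ∑ a : A, q a * f (p a / q a)

/-- `π` is a policy: each `π(·|s)` is a strictly positive probability distribution on `A`. -/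
def IsPolicy {S A : Type*} [Fintype A] (π : S → A → ℝ) : Prop :=
  (∀ s a, 0 < π s a) ∧ ∀ s, ∑ a : A, π s a = 1

/-- `Vf` satisfies the Bellman equation of the regularizer value function `V_f^{π}`:
`V_f^π(s) = D_f(π(·|s),π_ref(·|s)) + γ ∑_a π(a|s) ∑_{s'} P(s'|s,a) V_f^π(s')`. -/
def IsRegularizerValue {S A : Type*} [Fintype S] [Fintype A]
    (P : S → A → S → ℝ) (γ : ℝ) (f : ℝ → ℝ)
    (πref π : S → A → ℝ) (Vf : S → ℝ) : Prop :=
  ∀ s, Vf s = fDiv f (π s) (πref s) +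
      γ * ∑ a : A, π s a * ∑ s' : S, P s a s' * Vf s'


theorem abs_sum_mul_le {ι : Type*} (s : Finset ι) (w y : ι → ℝ) {c : ℝ}
    (hy : ∀ i ∈ s, |y i| ≤ c) : |∑ i ∈ s, w i * y i| ≤ (∑ i ∈ s, |w i|) * c := by
  rw [sum_mul]
  refine (abs_sum_le_sum_abs _ _).trans (sum_le_sum fun i hi => ?_)
  rw [abs_mul]
  exact mul_le_mul_of_nonneg_left (hy i hi) (abs_nonneg _)

theorem abs_sum_mul_le_of_sum_eq_one {ι : Type*} (s : Finset ι) {w : ι → ℝ} (y : ι → ℝ)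
    {c : ℝ} (hw0 : ∀ i ∈ s, 0 ≤ w i) (hw1 : ∑ i ∈ s, w i = 1) (hy : ∀ i ∈ s, |y i| ≤ c) :
    |∑ i ∈ s, w i * y i| ≤ c := by
  have := abs_sum_mul_le s w y hy
  rwa [sum_congr rfl fun i hi => abs_of_nonneg (hw0 i hi), hw1, one_mul] at this

theorem ContinuousLinearMap.iteratedDeriv_comp_left {F G : Type*} [NormedAddCommGroup F]
    [NormedSpace ℝ F] [NormedAddCommGroup G] [NormedSpace ℝ G] (L : F →L[ℝ] G) {f : ℝ → F}
    {n : WithTop ℕ∞} (hf : ContDiff ℝ n f) (x : ℝ) {k : ℕ} (hk : k ≤ n) :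
    iteratedDeriv k (fun y => L (f y)) x = L (iteratedDeriv k f x) := by
  simp [iteratedDeriv_eq_iteratedFDeriv, ← Function.comp_def,
    L.iteratedFDeriv_comp_left hf.contDiffAt hk]

section SupNorm
variable {S : Type*} [Fintype S]

theorem iteratedDeriv_apply_of_contDiff {n : WithTop ℕ∞} {φ : ℝ → S → ℝ}
    (hφ : ContDiff ℝ n φ) (x : ℝ) {k : ℕ} (hk : k ≤ n) (s : S) :
    iteratedDeriv k (fun l => φ l s) x = iteratedDeriv k φ x s :=
  (ContinuousLinearMap.proj (R := ℝ) (φ := fun _ : S => ℝ) s).iteratedDeriv_comp_left hφ x hk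

variable [Nonempty S]

theorem norm_eq_iSup_abs (x : S → ℝ) : ‖x‖ = ⨆ s, |x s| := by
  have hbdd : BddAbove (Set.range fun s => |x s|) := (Set.finite_range _).bddAbove
  refine le_antisymm ((pi_norm_le_iff_of_nonneg ?_).2 fun s => ?_) (ciSup_le fun s => ?_)
  · exact (abs_nonneg _).trans (le_ciSup hbdd (Classical.arbitrary S))
  · exact le_ciSup hbdd s
  · exact norm_le_pi_norm x s

theorem norm_iteratedDeriv_eq_iSup_abs {n : WithTop ℕ∞} {φ : ℝ → S → ℝ}
    (hφ : ContDiff ℝ n φ) (x : ℝ) {k : ℕ} (hk : k ≤ n) :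
    ‖iteratedDeriv k φ x‖ = ⨆ s, |iteratedDeriv k (fun l => φ l s) x| := by
  simp only [norm_eq_iSup_abs, iteratedDeriv_apply_of_contDiff hφ x hk]

end SupNorm

section FixedPoint
variable {E : Type*} [NormedAddCommGroup E] [NormedSpace ℝ E] {γ : ℝ}

theorem norm_add_smul_apply_le {L : E →L[ℝ] E} {c : ℝ} (hγ : 0 ≤ γ) (hL : ‖L‖ ≤ c) (y x : E) :
    ‖y + γ • L x‖ ≤ ‖y‖ + γ * (c * ‖x‖) := by
  grw [norm_add_le, norm_smul, Real.norm_of_nonneg hγ, L.le_opNorm, hL]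

theorem norm_le_div_of_eq_add_smul_apply {L : E →L[ℝ] E} {x y : E} (hγ0 : 0 ≤ γ) (hγ1 : γ < 1)
    (hL : ‖L‖ ≤ 1) (h : x = y + γ • L x) : ‖x‖ ≤ ‖y‖ / (1 - γ) := by
  have := norm_add_smul_apply_le hγ0 hL y x
  rw [← h] at this
  rw [le_div_iff₀ (by linarith)]
  linarith

theorem contDiff_of_eq_add_smul_apply [CompleteSpace E] {n : WithTop ℕ∞} {T : ℝ → E →L[ℝ] E}
    {D V : ℝ → E} (hγ0 : 0 ≤ γ) (hγ1 : γ < 1) (hT : ContDiff ℝ n T) (hD : ContDiff ℝ n D)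
    (hT0 : ∀ l, ‖T l‖ ≤ 1) (hV : ∀ l, V l = D l + γ • T l (V l)) : ContDiff ℝ n V := by
  have hunit (l : ℝ) : IsUnit (1 - γ • T l) := by
    refine isUnit_one_sub_of_norm_lt_one ?_
    rw [norm_smul, Real.norm_of_nonneg hγ0]
    nlinarith [hT0 l, norm_nonneg (T l)]
  have hV_eq : V = fun l => Ring.inverse (1 - γ • T l) (D l) := by
    funext l
    have hD : D l = (1 - γ • T l) (V l) := by simp [eq_sub_of_add_eq (hV l).symm]
    rw [hD]
    exact (congrArg (· (V l)) (Ring.inverse_mul_cancel _ (hunit l))).symm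
  rw [hV_eq, contDiff_iff_contDiffAt]
  intro l
  obtain ⟨u, hu⟩ := hunit l
  have hinv : ContDiffAt ℝ n Ring.inverse (1 - γ • T l) := hu ▸ contDiffAt_ringInverse ℝ u
  exact (hinv.comp l (contDiff_const.sub (hT.const_smul γ)).contDiffAt).clm_apply hD.contDiffAt

theorem deriv_eq_add_smul_apply {T : ℝ → E →L[ℝ] E} {D V : ℝ → E} {x : ℝ}
    (hV : ∀ l, V l = D l + γ • T l (V l)) (hT : DifferentiableAt ℝ T x)
    (hD : DifferentiableAt ℝ D x) (hVx : DifferentiableAt ℝ V x) :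
    deriv V x = (deriv D x + γ • deriv T x (V x)) + γ • T x (deriv V x) := by
  have h := hD.hasDerivAt.add ((hT.hasDerivAt.clm_apply hVx.hasDerivAt).const_smul γ)
  conv_lhs => rw [(h.congr_of_eventuallyEq (.of_forall hV)).deriv]
  rw [smul_add, add_assoc]

theorem deriv_deriv_eq_add_smul_apply {T : ℝ → E →L[ℝ] E} {D V : ℝ → E}
    (hV : ∀ l, V l = D l + γ • T l (V l)) (hT : ContDiff ℝ 2 T) (hD : ContDiff ℝ 2 D)
    (hVc : ContDiff ℝ 2 V) (x : ℝ) :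
    deriv (deriv V) x = deriv (deriv D) x + γ • (deriv (deriv T) x (V x) + deriv T x (deriv V x)) +
      γ • deriv T x (deriv V x) + γ • T x (deriv (deriv V) x) := by
  have hTd := hT.differentiable (by norm_num)
  have hVd := hVc.differentiable (by norm_num)
  have hV' (l : ℝ) := deriv_eq_add_smul_apply hV (hTd l) (hD.differentiable (by norm_num) l) (hVd l)
  have hsource : HasDerivAt (fun l => deriv D l + γ • deriv T l (V l))
      (deriv (deriv D) x + γ • (deriv (deriv T) x (V x) + deriv T x (deriv V x))) x :=
    (hD.differentiable_deriv_two x).hasDerivAt.add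
      (((hT.differentiable_deriv_two x).hasDerivAt.clm_apply (hVd x).hasDerivAt).const_smul γ)
  conv_lhs => rw [deriv_eq_add_smul_apply hV' (hTd x) hsource.differentiableAt
    (hVc.differentiable_deriv_two x), hsource.deriv]

theorem norm_iteratedDeriv_two_le_of_eq_add_smul_apply [CompleteSpace E]
    {T : ℝ → E →L[ℝ] E} {D V : ℝ → E} {β : ℝ} (hγ0 : 0 ≤ γ) (hγ1 : γ < 1)
    (hT : ContDiff ℝ 2 T) (hD : ContDiff ℝ 2 D) (hV : ∀ l, V l = D l + γ • T l (V l))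
    (hT0 : ∀ l, ‖T l‖ ≤ 1) (hT1 : ‖deriv T 0‖ ≤ β) (hT2 : ‖iteratedDeriv 2 T 0‖ ≤ 2 * β ^ 2) :
    ‖iteratedDeriv 2 V 0‖ ≤ 2 * γ * β / (1 - γ) ^ 2 * ‖deriv D 0‖ +
      2 * γ * β ^ 2 / (1 - γ) ^ 3 * ‖D 0‖ + 1 / (1 - γ) * ‖iteratedDeriv 2 D 0‖ := by
  have hVc := contDiff_of_eq_add_smul_apply hγ0 hγ1 hT hD hT0 hV
  have hV1 := deriv_eq_add_smul_apply hV (hT.differentiable (by norm_num) 0)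
    (hD.differentiable (by norm_num) 0) (hVc.differentiable (by norm_num) 0)
  have hV2 := deriv_deriv_eq_add_smul_apply hV hT hD hVc 0
  simp only [iteratedDeriv_succ, iteratedDeriv_zero] at hT2 ⊢
  have hβ : 0 ≤ β := (norm_nonneg _).trans hT1
  have hγ1' : 0 < 1 - γ := by linarith
  have h0 : ‖V 0‖ ≤ ‖D 0‖ / (1 - γ) := norm_le_div_of_eq_add_smul_apply hγ0 hγ1 (hT0 0) (hV 0)
  have h1 : ‖deriv V 0‖ ≤ (‖deriv D 0‖ + γ * (β * (‖D 0‖ / (1 - γ)))) / (1 - γ) := by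
    grw [norm_le_div_of_eq_add_smul_apply hγ0 hγ1 (hT0 0) hV1,
      norm_add_smul_apply_le hγ0 hT1, h0]
  have h2 : ‖deriv (deriv V) 0‖ ≤
      (‖deriv (deriv D) 0‖ + γ * (2 * β ^ 2 * ‖V 0‖ + 2 * β * ‖deriv V 0‖)) / (1 - γ) := by
    grw [norm_le_div_of_eq_add_smul_apply hγ0 hγ1 (hT0 0) hV2, norm_add_smul_apply_le hγ0 hT1,
      norm_add_le, norm_smul, Real.norm_of_nonneg hγ0, norm_add_le, (deriv (deriv T) 0).le_opNorm,
      hT2, (deriv T 0).le_opNorm, hT1]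
    exact le_of_eq (by ring)
  calc ‖deriv (deriv V) 0‖
      ≤ (‖deriv (deriv D) 0‖ + γ * (2 * β ^ 2 * (‖D 0‖ / (1 - γ)) + 2 * β *
          ((‖deriv D 0‖ + γ * (β * (‖D 0‖ / (1 - γ)))) / (1 - γ)))) / (1 - γ) := by
        grw [h2, h0, h1]
    _ = _ := by field_simp; ring

end FixedPoint

section MDP
variable {S A : Type*} [Fintype S] [Fintype A]

/-- Bilinear in the policy weights `w` and the vector `x`, so derivatives of
`l ↦ transitionOp P (π l)` are `transitionOp P` applied to the derivatives of `π`. -/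
noncomputable def transitionOp (P : S → A → S → ℝ) :
    (S → A → ℝ) →L[ℝ] (S → ℝ) →L[ℝ] (S → ℝ) :=
  LinearMap.toContinuousLinearMap <| LinearMap.toContinuousLinearMap.toLinearMap ∘ₗ
    LinearMap.mk₂ ℝ (fun w x s => ∑ a, w s a * ∑ s', P s a s' * x s')
      (fun w w' x => by funext s; simp [add_mul, sum_add_distrib])
      (fun c w x => by funext s; simp [mul_sum, mul_assoc])
      (fun w x x' => by funext s; simp [mul_add, sum_add_distrib])
      (fun c w x => by
        funext s; simp only [Pi.smul_apply, smul_eq_mul, mul_sum, mul_left_comm c])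

theorem transitionOp_apply (P : S → A → S → ℝ) (w : S → A → ℝ) (x : S → ℝ) (s : S) :
    transitionOp P w x s = ∑ a, w s a * ∑ s', P s a s' * x s' := rfl

theorem norm_transitionOp_le {P : S → A → S → ℝ}
    (hP : ∀ s a, (∀ s', 0 ≤ P s a s') ∧ ∑ s', P s a s' = 1) {w : S → A → ℝ} {c : ℝ} (hc : 0 ≤ c)
    (hw : ∀ s, ∑ a, |w s a| ≤ c) : ‖transitionOp P w‖ ≤ c := by
  refine ContinuousLinearMap.opNorm_le_bound _ hc fun x =>
    (pi_norm_le_iff_of_nonneg (by positivity)).2 fun s => ?_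
  have hPx (a : A) : |∑ s', P s a s' * x s'| ≤ ‖x‖ :=
    abs_sum_mul_le_of_sum_eq_one _ _ (fun s' _ => (hP s a).1 s') (hP s a).2
      fun s' _ => norm_le_pi_norm x s'
  rw [transitionOp_apply, Real.norm_eq_abs]
  exact (abs_sum_mul_le _ _ _ fun a _ => hPx a).trans (by gcongr; exact hw s)

theorem norm_transitionOp_le_one {P : S → A → S → ℝ}
    (hP : ∀ s a, (∀ s', 0 ≤ P s a s') ∧ ∑ s', P s a s' = 1) {π : S → A → ℝ} (hπ : IsPolicy π) :
    ‖transitionOp P π‖ ≤ 1 :=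
  norm_transitionOp_le hP zero_le_one fun s =>
    ((sum_congr rfl fun a _ => abs_of_pos (hπ.1 s a)).trans (hπ.2 s)).le

theorem isRegularizerValue_iff {P : S → A → S → ℝ} {γ : ℝ} {f : ℝ → ℝ} {πref π : S → A → ℝ}
    {V : S → ℝ} : IsRegularizerValue P γ f πref π V ↔
      V = (fun s => fDiv f (π s) (πref s)) + γ • transitionOp P π V := by
  simp [IsRegularizerValue, funext_iff, transitionOp_apply]

theorem contDiff_fDiv_comp {n : WithTop ℕ∞} {f : ℝ → ℝ} (hf : ContDiffOn ℝ n f (Set.Ioi 0))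
    {p : ℝ → S → A → ℝ} (hp : ContDiff ℝ n p) (hp0 : ∀ l s a, 0 < p l s a) {q : S → A → ℝ}
    (hq0 : ∀ s a, 0 < q s a) :
    ContDiff ℝ n fun l s => fDiv f (p l s) (q s) := by
  refine contDiff_pi.2 fun s => ContDiff.sum fun a _ => contDiff_const.mul ?_
  exact hf.comp_contDiff ((contDiff_pi.1 (contDiff_pi.1 hp s) a).div_const _)
    fun l => div_pos (hp0 l s a) (hq0 s a)

end MDP

section Softmax
variable {S A : Type*} [Fintype A]

theorem sum_exp_pos [Nonempty A] (g : A → ℝ) : 0 < ∑ a, Real.exp (g a) :=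
  sum_pos (fun _ _ => Real.exp_pos _) univ_nonempty

theorem isPolicy_softmaxPolicy [Nonempty A] (θ : S × A → ℝ) : IsPolicy (softmaxPolicy θ) := by
  refine ⟨fun s a => div_pos (Real.exp_pos _) (sum_exp_pos _), fun s => ?_⟩
  simp only [softmaxPolicy, ← sum_div, div_self (sum_exp_pos _).ne']

theorem contDiff_softmaxPolicy_line [Fintype S] [Nonempty A] {n : WithTop ℕ∞}
    (θ v : S × A → ℝ) : ContDiff ℝ n fun l : ℝ => softmaxPolicy (θ + l • v) := by
  have hexp (s : S) (a : A) : ContDiff ℝ n fun l : ℝ => Real.exp ((θ + l • v) (s, a)) := by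
    simp only [Pi.add_apply, Pi.smul_apply, smul_eq_mul]
    fun_prop
  exact contDiff_pi.2 fun s => contDiff_pi.2 fun a =>
    (hexp s a).div (ContDiff.sum fun b _ => hexp s b) fun l => (sum_exp_pos _).ne'

/-- The velocity `d/dl π_{θ + l v}` of the softmax policy, as a function of `π = π_{θ + l v}`. -/
noncomputable def softmaxTangent (π : S → A → ℝ) (v : S × A → ℝ) (s : S) (a : A) : ℝ :=
  π s a * (v (s, a) - ∑ b, π s b * v (s, b))

noncomputable def softmaxTangentDeriv (π w : S → A → ℝ) (v : S × A → ℝ) (s : S) (a : A) : ℝ :=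
  w s a * (v (s, a) - ∑ b, π s b * v (s, b)) - π s a * ∑ b, w s b * v (s, b)

theorem hasDerivAt_softmaxPolicy_line [Fintype S] [Nonempty A] (θ v : S × A → ℝ) (l : ℝ) :
    HasDerivAt (fun l : ℝ => softmaxPolicy (θ + l • v))
      (softmaxTangent (softmaxPolicy (θ + l • v)) v) l := by
  refine hasDerivAt_pi.2 fun s => hasDerivAt_pi.2 fun a => ?_
  simp only [softmaxTangent, softmaxPolicy, Pi.add_apply, Pi.smul_apply, smul_eq_mul]
  have hexp (b : A) : HasDerivAt (fun l => Real.exp (θ (s, b) + l * v (s, b)))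
      (Real.exp (θ (s, b) + l * v (s, b)) * v (s, b)) l :=
    ((hasDerivAt_mul_const (v (s, b))).const_add (θ (s, b))).exp
  refine ((hexp a).div (HasDerivAt.fun_sum fun b _ => hexp b)
    (sum_exp_pos _).ne').congr_deriv ?_
  simp only [div_mul_eq_mul_div, ← sum_div]
  field_simp

theorem HasDerivAt.softmaxTangent [Fintype S] {p : ℝ → S → A → ℝ} {w : S → A → ℝ} {l : ℝ}
    (hp : HasDerivAt p w l) (v : S × A → ℝ) :
    HasDerivAt (fun l => softmaxTangent (p l) v) (softmaxTangentDeriv (p l) w v) l := by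
  have hpc (s : S) (a : A) : HasDerivAt (fun l => p l s a) (w s a) l :=
    hasDerivAt_pi.1 (hasDerivAt_pi.1 hp s) a
  refine hasDerivAt_pi.2 fun s => hasDerivAt_pi.2 fun a => ?_
  refine ((hpc s a).mul ((hasDerivAt_const l (v (s, a))).sub
    (HasDerivAt.fun_sum fun b _ => (hpc s b).mul_const (v (s, b))))).congr_deriv ?_
  simp only [softmaxTangentDeriv, Pi.sub_apply]
  ring

variable {π : S → A → ℝ} {v : S × A → ℝ} {b : ℝ}

theorem abs_sub_sum_mul_le (hπ : IsPolicy π) (hv : ∀ sa, |v sa| ≤ b) (s : S) (a : A) :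
    |v (s, a) - ∑ a', π s a' * v (s, a')| ≤ 2 * b := by
  have hmean := abs_sum_mul_le_of_sum_eq_one univ (fun a' => v (s, a'))
    (fun a' _ => (hπ.1 s a').le) (hπ.2 s) fun a' _ => hv (s, a')
  linarith [abs_sub (v (s, a)) (∑ a', π s a' * v (s, a')), hv (s, a)]

theorem sum_abs_softmaxTangent_le (hπ : IsPolicy π) (hv : ∀ sa, |v sa| ≤ b) (s : S) :
    ∑ a, |softmaxTangent π v s a| ≤ 2 * b := by
  calc ∑ a, |softmaxTangent π v s a| ≤ ∑ a, π s a * (2 * b) := by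
        refine sum_le_sum fun a _ => ?_
        rw [softmaxTangent, abs_mul, abs_of_pos (hπ.1 s a)]
        exact mul_le_mul_of_nonneg_left (abs_sub_sum_mul_le hπ hv s a) (hπ.1 s a).le
    _ = 2 * b := by rw [← sum_mul, hπ.2 s, one_mul]

theorem sum_abs_softmaxTangentDeriv_le [Nonempty A] (hπ : IsPolicy π) (hv : ∀ sa, |v sa| ≤ b)
    {w : S → A → ℝ} {c : ℝ} {s : S} (hw : ∑ a, |w s a| ≤ c) :
    ∑ a, |softmaxTangentDeriv π w v s a| ≤ 3 * b * c := by
  have hb : 0 ≤ b := (abs_nonneg _).trans (hv (s, Classical.arbitrary A))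
  have hwv : |∑ a, w s a * v (s, a)| ≤ c * b :=
    (abs_sum_mul_le _ _ _ fun a _ => hv (s, a)).trans (by gcongr)
  calc ∑ a, |softmaxTangentDeriv π w v s a|
      ≤ ∑ a, (|w s a| * (2 * b) + π s a * (c * b)) := by
        refine sum_le_sum fun a _ => (abs_sub _ _).trans ?_
        rw [abs_mul, abs_mul, abs_of_pos (hπ.1 s a)]
        gcongr
        · exact abs_sub_sum_mul_le hπ hv s a
        · exact (hπ.1 s a).le
    _ ≤ c * (2 * b) + 1 * (c * b) := by
        rw [sum_add_distrib, ← sum_mul, ← sum_mul, hπ.2 s]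
        gcongr
    _ = 3 * b * c := by ring

end Softmax

section SoftmaxLine
variable {S A : Type*} [Fintype S] [Fintype A] [Nonempty A]

theorem iteratedDeriv_two_softmaxPolicy_line (θ v : S × A → ℝ) (x : ℝ) :
    iteratedDeriv 2 (fun l : ℝ => softmaxPolicy (θ + l • v)) x =
      softmaxTangentDeriv (softmaxPolicy (θ + x • v))
        (softmaxTangent (softmaxPolicy (θ + x • v)) v) v := by
  rw [iteratedDeriv_succ, iteratedDeriv_one,
    funext fun l => (hasDerivAt_softmaxPolicy_line θ v l).deriv]
  exact ((hasDerivAt_softmaxPolicy_line θ v x).softmaxTangent v).deriv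

theorem norm_deriv_transitionOp_softmaxPolicy_line_le [Nonempty S] {P : S → A → S → ℝ}
    {θ v : S × A → ℝ} {b : ℝ} (hP : ∀ s a, (∀ s', 0 ≤ P s a s') ∧ ∑ s', P s a s' = 1)
    (hv : ∀ sa, |v sa| ≤ b) (x : ℝ) :
    ‖deriv (fun l : ℝ => transitionOp P (softmaxPolicy (θ + l • v))) x‖ ≤ 2 * b := by
  have h : HasDerivAt (fun l : ℝ => transitionOp P (softmaxPolicy (θ + l • v)))
      (transitionOp P (softmaxTangent (softmaxPolicy (θ + x • v)) v)) x :=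
    (transitionOp P).hasFDerivAt.comp_hasDerivAt x (hasDerivAt_softmaxPolicy_line θ v x)
  have hb : 0 ≤ b := (abs_nonneg _).trans (hv (Classical.arbitrary _))
  rw [h.deriv]
  exact norm_transitionOp_le hP (by positivity)
    (sum_abs_softmaxTangent_le (isPolicy_softmaxPolicy _) hv)

theorem norm_iteratedDeriv_two_transitionOp_softmaxPolicy_line_le [Nonempty S]
    {P : S → A → S → ℝ} {θ v : S × A → ℝ} {b : ℝ}
    (hP : ∀ s a, (∀ s', 0 ≤ P s a s') ∧ ∑ s', P s a s' = 1) (hv : ∀ sa, |v sa| ≤ b) (x : ℝ) :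
    ‖iteratedDeriv 2 (fun l : ℝ => transitionOp P (softmaxPolicy (θ + l • v))) x‖ ≤
      2 * (2 * b) ^ 2 := by
  have hb : 0 ≤ b := (abs_nonneg _).trans (hv (Classical.arbitrary _))
  have hπ := isPolicy_softmaxPolicy (θ + x • v)
  rw [(transitionOp P).iteratedDeriv_comp_left (contDiff_softmaxPolicy_line θ v) x le_rfl,
    iteratedDeriv_two_softmaxPolicy_line]
  refine norm_transitionOp_le hP (by positivity) fun s => ?_
  grw [sum_abs_softmaxTangentDeriv_le hπ hv (sum_abs_softmaxTangent_le hπ hv s)]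
  nlinarith

end SoftmaxLine

theorem abs_iteratedDeriv_two_regularizerValue_le {S A : Type*} [Fintype S] [Fintype A]
    [Nonempty S] [Nonempty A] {P : S → A → S → ℝ}
    (hP : ∀ s a, (∀ s', 0 ≤ P s a s') ∧ ∑ s', P s a s' = 1) {γ : ℝ} (hγ0 : 0 ≤ γ) (hγ1 : γ < 1)
    {πref : S → A → ℝ} (hπref : ∀ s a, 0 < πref s a) {f : ℝ → ℝ}
    (hf : ContDiffOn ℝ 2 f (Set.Ioi 0)) {θ v : S × A → ℝ} {b : ℝ} (hv : ∀ sa, |v sa| ≤ b)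
    {V : ℝ → S → ℝ} (hV : ∀ l, IsRegularizerValue P γ f πref (softmaxPolicy (θ + l • v)) (V l))
    (s : S) :
    |iteratedDeriv 2 (fun l => V l s) 0| ≤
      4 * γ * b / (1 - γ) ^ 2 *
        (⨆ s', |deriv (fun l : ℝ => fDiv f (softmaxPolicy (θ + l • v) s') (πref s')) 0|) +
      8 * γ * b ^ 2 / (1 - γ) ^ 3 * (⨆ s', |fDiv f (softmaxPolicy θ s') (πref s')|) +
      1 / (1 - γ) *
        (⨆ s', |iteratedDeriv 2
          (fun l : ℝ => fDiv f (softmaxPolicy (θ + l • v) s') (πref s')) 0|) := by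
  have hπc : ContDiff ℝ 2 fun l : ℝ => softmaxPolicy (θ + l • v) := contDiff_softmaxPolicy_line θ v
  have hT : ContDiff ℝ 2 fun l : ℝ => transitionOp P (softmaxPolicy (θ + l • v)) :=
    (transitionOp P).contDiff.comp hπc
  have hD : ContDiff ℝ 2 fun l s => fDiv f (softmaxPolicy (θ + l • v) s) (πref s) :=
    contDiff_fDiv_comp hf hπc (fun l => (isPolicy_softmaxPolicy _).1) hπref
  have hT0 (l : ℝ) := norm_transitionOp_le_one hP (isPolicy_softmaxPolicy (θ + l • v))
  have hV' (l : ℝ) := isRegularizerValue_iff.1 (hV l)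
  have key := norm_iteratedDeriv_two_le_of_eq_add_smul_apply hγ0 hγ1 hT hD hV' hT0
    (norm_deriv_transitionOp_softmaxPolicy_line_le hP hv 0)
    (norm_iteratedDeriv_two_transitionOp_softmaxPolicy_line_le hP hv 0)
  have hVc := contDiff_of_eq_add_smul_apply hγ0 hγ1 hT hD hT0 hV'
  calc |iteratedDeriv 2 (fun l => V l s) 0| ≤ ‖iteratedDeriv 2 V 0‖ := by
        rw [iteratedDeriv_apply_of_contDiff hVc 0 le_rfl]
        exact norm_le_pi_norm (iteratedDeriv 2 V 0) s
    _ ≤ _ := key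
    _ = _ := by
        rw [← iteratedDeriv_one, norm_iteratedDeriv_eq_iSup_abs hD 0 (by norm_num),
          norm_iteratedDeriv_eq_iSup_abs hD 0 le_rfl, norm_eq_iSup_abs, zero_smul, add_zero]
        simp only [iteratedDeriv_one]
        ring

theorem smoothness_framework_general
    {S A : Type*} [Fintype S] [Fintype A] [Nonempty S] [Nonempty A]
    (P : S → A → S → ℝ) (hP : ∀ s a, (∀ s', 0 ≤ P s a s') ∧ ∑ s' : S, P s a s' = 1)
    (γ : ℝ) (hγ0 : 0 ≤ γ) (hγ1 : γ < 1)
    (πref : S → A → ℝ) (hπref : IsPolicy πref)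
    (f : ℝ → ℝ)
    (hf : ContDiffOn ℝ 2 f (Set.Ioi 0))
    (Vf : EuclideanSpace ℝ (S × A) → S → ℝ)
    (hVf : ∀ θ, IsRegularizerValue P γ f πref (softmaxPolicy θ) (Vf (WithLp.toLp 2 θ)))
    (θ v : EuclideanSpace ℝ (S × A)) (s : S) :
    |iteratedDeriv 2 (fun l : ℝ => Vf (θ + l • v) s) 0| ≤
      4 * γ * ‖v‖ / (1 - γ) ^ 2 *
        (⨆ s' : S,
          |deriv (fun l : ℝ => fDiv f (softmaxPolicy (θ + l • v) s') (πref s')) 0|) +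
      8 * γ * ‖v‖ ^ 2 / (1 - γ) ^ 3 *
        (⨆ s' : S, |fDiv f (softmaxPolicy θ s') (πref s')|) +
      1 / (1 - γ) *
        (⨆ s' : S,
          |iteratedDeriv 2
            (fun l : ℝ => fDiv f (softmaxPolicy (θ + l • v) s') (πref s')) 0|) :=
  abs_iteratedDeriv_two_regularizerValue_le (θ := WithLp.ofLp θ) (v := WithLp.ofLp v)
    hP hγ0 hγ1 hπref.1 hf (PiLp.norm_apply_le v) (fun l => hVf (θ + l • v)) s

/-- (Smoothness framework) Suppose `f` is twice continuously
differentiable on `(0,∞)`. For any `θ, v ∈ ℝ^{S×A}` and any state `s`, the second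
derivative at `l = 0` of `l ↦ V_f^{π_{θ+lv}}(s)` satisfies
`|d²/dl² V_f^{π_{θ+lv}}(s)|_{l=0}| ≤ (4γ‖v‖₂/(1−γ)²)·‖D D_f(θ)[v]‖_∞ +
(8γ‖v‖₂²/(1−γ)³)·‖D_f(θ)‖_∞ + (1/(1−γ))·‖D² D_f(θ)[v,v]‖_∞`. -/
theorem smoothness_framework
    {S A : Type*} [Fintype S] [Fintype A] [Nonempty S] [Nonempty A]
    (P : S → A → S → ℝ) (hP : ∀ s a, (∀ s', 0 ≤ P s a s') ∧ ∑ s' : S, P s a s' = 1)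
    (γ : ℝ) (hγ0 : 0 ≤ γ) (hγ1 : γ < 1)
    (πref : S → A → ℝ) (hπref : IsPolicy πref)
    (f : ℝ → ℝ) (hfconv : ConvexOn ℝ (Set.Ioi 0) f) (hf1 : f 1 = 0)
    (hf : ContDiffOn ℝ 2 f (Set.Ioi 0))
    (Vf : EuclideanSpace ℝ (S × A) → S → ℝ)
    (hVf : ∀ θ, IsRegularizerValue P γ f πref (softmaxPolicy θ) (Vf (WithLp.toLp 2 θ)))
    (θ v : EuclideanSpace ℝ (S × A)) (s : S) :
    |iteratedDeriv 2 (fun l : ℝ => Vf (θ + l • v) s) 0| ≤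
      4 * γ * ‖v‖ / (1 - γ) ^ 2 *
        (⨆ s' : S,
          |deriv (fun l : ℝ => fDiv f (softmaxPolicy (θ + l • v) s') (πref s')) 0|) +
      8 * γ * ‖v‖ ^ 2 / (1 - γ) ^ 3 *
        (⨆ s' : S, |fDiv f (softmaxPolicy θ s') (πref s')|) +
      1 / (1 - γ) *
        (⨆ s' : S,
          |iteratedDeriv 2
            (fun l : ℝ => fDiv f (softmaxPolicy (θ + l • v) s') (πref s')) 0|) :=
  smoothness_framework_general P hP γ hγ0 hγ1 πref hπref f hf Vf hVf θ v s
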